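/- Let J(v) be the symmetric 2×2 matrix with entries J₁₁ = c - v², J₁₂ = J₂₁ = (c - 1/c)/2 and J₂₂ = -b/c, for real parameters b, c with c > 0. Then for all real v, the largest eigenvalue of J(v) is at most the largest eigenvalue of J(0), which equals (−b + c² + √(1 + b² + 2(b−1)c² + 2c⁴))/(2c). -/
import Mathlib


/-- Largest eigenvalue of the symmetric 2×2 matrix [[p, q],[q, r]]. -/
noncomputable def lamMax (p q r : ℝ) : ℝ := ((p + r) + Real.sqrt ((p - r) ^ 2 + 4 * q ^ 2)) / 2

lemma lamMax_mono (p p' q r : ℝ) (h : p ≤ p') : lamMax p q r ≤ lamMax p' q r := by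
  unfold lamMax
  have hs0 : 0 ≤ Real.sqrt ((p' - r) ^ 2 + 4 * q ^ 2) := Real.sqrt_nonneg _
  have hs2 : (Real.sqrt ((p' - r) ^ 2 + 4 * q ^ 2)) ^ 2 = (p' - r) ^ 2 + 4 * q ^ 2 :=
    Real.sq_sqrt (by positivity)
  have key : Real.sqrt ((p - r) ^ 2 + 4 * q ^ 2)
      ≤ Real.sqrt ((p' - r) ^ 2 + 4 * q ^ 2) + (p' - p) := by
    set s := Real.sqrt ((p' - r) ^ 2 + 4 * q ^ 2) with hsdef
    have habs : -(p' - r) ≤ s := by nlinarith [sq_nonneg q]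
    have hmul : 0 ≤ (p' - p) * (s + (p' - r)) :=
      mul_nonneg (by linarith) (by linarith)
    calc Real.sqrt ((p - r) ^ 2 + 4 * q ^ 2)
        ≤ Real.sqrt ((s + (p' - p)) ^ 2) :=
          Real.sqrt_le_sqrt (by nlinarith [hmul])
      _ = s + (p' - p) := Real.sqrt_sq (by linarith)
  linarith
set_option maxHeartbeats 800000 in
theorem stmt_8 (b c : ℝ) (hc : 0 < c) :
    (∀ v : ℝ, lamMax (c - v ^ 2) ((c - 1 / c) / 2) (-b / c)
        ≤ lamMax c ((c - 1 / c) / 2) (-b / c)) ∧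
    lamMax c ((c - 1 / c) / 2) (-b / c)
      = (-b + c ^ 2 + Real.sqrt (1 + b ^ 2 + 2 * (b - 1) * c ^ 2 + 2 * c ^ 4)) / (2 * c) := by
  constructor
  · intro v
    exact lamMax_mono _ _ _ _ (by nlinarith [sq_nonneg v])
  · unfold lamMax
    have hc' : c ≠ 0 := ne_of_gt hc
    have h1 : (c - -b / c) ^ 2 + 4 * ((c - 1 / c) / 2) ^ 2
        = (1 + b ^ 2 + 2 * (b - 1) * c ^ 2 + 2 * c ^ 4) / c ^ 2 := by
      field_simp; ring
    have hS : 0 ≤ 1 + b ^ 2 + 2 * (b - 1) * c ^ 2 + 2 * c ^ 4 := by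
      nlinarith [sq_nonneg (c^2 + b), sq_nonneg (c^2 - 1)]
    rw [h1, Real.sqrt_div hS, Real.sqrt_sq hc.le]
    field_simp
    ring
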